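/- Let K be a finite connected graph with first Betti number k and let (γ_1,…,γ_k) be an integral basis of Z_1(K,ℤ). Then Σ_{T spanning tree of K} (γ(T,e_1) ∧ … ∧ γ(T,e_k)) ⊗ (e_1 ∧ … ∧ e_k) = (γ_1 ∧ … ∧ γ_k)^{⊗2} in (⋀^k Z_1(K,ℤ))⊗(⋀^k C_1(K,ℤ)), where for each spanning tree T, e_1,…,e_k are the positively oriented edges of K not in T (in a fixed order) and γ(T,e_i) are the corresponding fundamental cycles. -/

import Mathlib

/-! Framework: finite connected graph `K = (V, E, head, tail)` with linearly ordered
edge set; `C₁(K,ℤ)` is modeled as `E → ℤ`. -/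

section Graph

variable {V E : Type*} [Fintype V] [Fintype E] [DecidableEq V] [DecidableEq E]
  [LinearOrder E]

/-- The boundary operator `∂`; its kernel is the cycle group `Z₁(K,ℤ)`. -/
def bd (head tail : E → V) : (E → ℤ) →ₗ[ℤ] (V → ℤ) where
  toFun c := fun v => ∑ e, c e *
    ((if head e = v then 1 else 0) - (if tail e = v then 1 else 0))
  map_add' c d := by
    funext v
    simp [add_mul, Finset.sum_add_distrib]
  map_smul' r c := by
    funext v
    simp [Finset.mul_sum, mul_assoc]

/-- Two vertices are connected through the edges of `T`. -/
def Conn (head tail : E → V) (T : Finset E) (v w : V) : Prop :=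
  Relation.ReflTransGen
    (fun a b => ∃ e ∈ T, (head e = a ∧ tail e = b) ∨ (head e = b ∧ tail e = a)) v w

/-- `T` is a spanning tree. -/
def IsSpanningTree (head tail : E → V) (T : Finset E) : Prop :=
  T.card + 1 = Fintype.card V ∧ ∀ v w : V, Conn head tail T v w

/-- Wedge of a list of chains, in the exterior algebra of `C₁(K,ℤ)`. -/
noncomputable def listWedge (l : List (E → ℤ)) : ExteriorAlgebra ℤ (E → ℤ) :=
  (l.map (fun c => ExteriorAlgebra.ι ℤ c)).prod

/-- The wedge `e_S` of the canonical edge basis vectors of `S`, in the fixed order. -/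
noncomputable def eWedge (S : Finset E) : ExteriorAlgebra ℤ (E → ℤ) :=
  listWedge ((S.sort (· ≤ ·)).map (fun e => Pi.single e (1 : ℤ)))

/-- The wedge `γ₁ ∧ … ∧ γₙ` of a finite family of chains. -/
noncomputable def chainWedge {n : ℕ} (γ : Fin n → (E → ℤ)) :
    ExteriorAlgebra ℤ (E → ℤ) :=
  listWedge ((List.finRange n).map γ)

end Graph

/-! For a spanning tree `T` with complement `S = {e₁ < … < e_k}`, the fundamental cycles
`γ(T,eⱼ)` form a basis of `Z₁` in which the coordinates of a cycle are its values on `S`.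
Hence `γ = A • γ(T,·)` with `A` the minor of the matrix `(γᵢ(e))` on the columns `S`, and `A`
is unimodular since `γ` is a basis as well; as `(det A)² = 1`,
`γ(T,e₁) ∧ … ∧ γ(T,e_k) = det A • γ₁ ∧ … ∧ γ_k`. The left-hand side thus becomes
`(γ₁ ∧ … ∧ γ_k) ⊗ Σ_S det(γ|_S) • e_S`, and the sum may be taken over all `k`-sets `S`: if `Sᶜ`
is not a spanning tree it is disconnected, and the coboundary of one of its components is a
nonzero vector in the kernel of `γ|_S`. What remains is the Cauchy–Binet expansion of
`γ₁ ∧ … ∧ γ_k` in the basis `e_S`. -/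

open Finset

theorem Finset.sum_orderEmbOfFin {α M : Type*} [LinearOrder α] [AddCommMonoid M] {k : ℕ}
    (S : Finset α) (hS : #S = k) (f : α → M) : ∑ j, f (S.orderEmbOfFin hS j) = ∑ x ∈ S, f x := by
  conv_rhs => rw [← map_orderEmbOfFin_univ S hS]
  rw [sum_map]
  rfl

section LinearAlgebra

variable {R M N ι : Type*} [CommRing R] [AddCommGroup M] [Module R M] [AddCommGroup N] [Module R N]
  [Fintype ι] [DecidableEq ι]

theorem AlternatingMap.map_eq_basis_det_smul (e : Module.Basis ι R M) (f : M [⋀^ι]→ₗ[R] N)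
    (v : ι → M) : f v = e.det v • f e := by
  suffices f = e.det.smulRight (f e) from DFunLike.congr_fun this v
  refine e.ext_alternating fun i hi => ?_
  let σ : Equiv.Perm ι := Equiv.ofBijective i (Finite.injective_iff_bijective.1 hi)
  change f (e ∘ σ) = e.det (e ∘ σ) • f e
  simp [AlternatingMap.map_perm, Module.Basis.det_self]

theorem AlternatingMap.map_sum_smul_eq_det_smul (f : M [⋀^ι]→ₗ[R] N) (A : Matrix ι ι R)
    (w : ι → M) : f (fun i => ∑ j, A i j • w j) = A.det • f w := by
  have := (f.compLinearMap (Fintype.linearCombination R w)).map_eq_basis_det_smul (Pi.basisFun R ι)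
    fun i => A i
  simp only [AlternatingMap.compLinearMap_apply, Pi.basisFun_apply,
    Fintype.linearCombination_apply_single, one_smul, Pi.basisFun_det_apply] at this
  simp only [Fintype.linearCombination_apply] at this
  exact this

theorem isUnit_det_of_linearIndependent {γ w : ι → M} (hγ : LinearIndependent R γ)
    (hw : ∀ j, w j ∈ Submodule.span R (Set.range γ)) {A : Matrix ι ι R}
    (hA : ∀ i, γ i = ∑ j, A i j • w j) : IsUnit A.det := by
  choose B hB using fun j => (Submodule.mem_span_range_iff_exists_fun R).mp (hw j)
  refine Matrix.isUnit_det_of_right_inverse (B := Matrix.of B) (Matrix.ext fun i => ?_)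
  refine Fintype.linearIndependent_iffₛ.mp hγ _ _ ?_
  calc ∑ l, (A * Matrix.of B) i l • γ l = ∑ j, A i j • w j := by
        simp only [Matrix.mul_apply, Finset.sum_smul, ← hB, Finset.smul_sum, smul_smul,
          Matrix.of_apply]
        exact Finset.sum_comm
    _ = γ i := (hA i).symm
    _ = ∑ l, (1 : Matrix ι ι R) i l • γ l := by simp [Matrix.one_apply]

end LinearAlgebra

open Set.powersetCard in
theorem ExteriorAlgebra.ιMulti_eq_sum_det_smul_ιMulti_family {R E : Type*} [CommRing R]
    [Fintype E] [LinearOrder E] {k : ℕ} (γ : Fin k → E → R) :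
    ExteriorAlgebra.ιMulti R k γ = ∑ s : Set.powersetCard E k,
      (Matrix.of fun i j => γ i (ofFinEmbEquiv.symm s j)).det •
        ExteriorAlgebra.ιMulti_family R k (Pi.basisFun R E) s := by
  have := ((Pi.basisFun R E).exteriorPower k).sum_repr (exteriorPower.ιMulti R k γ)
  simp_rw [exteriorPower.basis_repr_apply, exteriorPower.ιMultiDual_apply_ιMulti,
    exteriorPower.basis_apply] at this
  rw [← exteriorPower.ιMulti_apply_coe, ← this]
  simp

section Connectivity

variable {V E : Type*} {head tail : E → V} {T T' : Finset E} {e : E} {u v w : V}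

@[simp]
theorem conn_refl : Conn head tail T v v := .refl

theorem Conn.symm (h : Conn head tail T v w) : Conn head tail T w v := by
  induction h with
  | refl => exact .refl
  | tail _ hstep ih => obtain ⟨e, he, hbc⟩ := hstep; exact .head ⟨e, he, hbc.symm⟩ ih

theorem Conn.trans (h : Conn head tail T u v) (h' : Conn head tail T v w) :
    Conn head tail T u w :=
  Relation.ReflTransGen.trans h h'

theorem Conn.mono (hT : T ⊆ T') (h : Conn head tail T v w) : Conn head tail T' v w :=
  Relation.ReflTransGen.mono (fun _ _ ⟨e, he, h⟩ => ⟨e, hT he, h⟩) _ _ h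

theorem conn_of_mem (he : e ∈ T) : Conn head tail T (head e) (tail e) :=
  .single ⟨e, he, .inl ⟨rfl, rfl⟩⟩

theorem Conn.eq_of_empty (h : Conn head tail ∅ v w) : v = w := by
  induction h with
  | refl => rfl
  | tail _ hstep => obtain ⟨e, he, -⟩ := hstep; simp at he

theorem Conn.of_insert [DecidableEq E] (h : Conn head tail (insert e T) v w) :
    Conn head tail T v w ∨
      ((Conn head tail T v (head e) ∨ Conn head tail T v (tail e)) ∧
        (Conn head tail T w (head e) ∨ Conn head tail T w (tail e))) := by
  induction h with
  | refl => exact .inl .refl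
  | @tail b c _ hstep ih =>
    obtain ⟨f, hf, hbc⟩ := hstep
    rcases mem_insert.mp hf with rfl | hfT
    · have hc : Conn head tail T c (head f) ∨ Conn head tail T c (tail f) := by
        rcases hbc with ⟨-, rfl⟩ | ⟨rfl, -⟩
        exacts [.inr .refl, .inl .refl]
      refine .inr ⟨?_, hc⟩
      rcases ih with hvb | ⟨hv, -⟩
      · rcases hbc with ⟨rfl, -⟩ | ⟨-, rfl⟩
        exacts [.inl hvb, .inr hvb]
      · exact hv
    · have hbc : Conn head tail T b c := by
        rcases hbc with ⟨rfl, rfl⟩ | ⟨rfl, rfl⟩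
        exacts [conn_of_mem hfT, (conn_of_mem hfT).symm]
      rcases ih with hvb | ⟨hv, hb⟩
      · exact .inl (hvb.trans hbc)
      · exact .inr ⟨hv, hb.imp hbc.symm.trans hbc.symm.trans⟩

theorem Conn.of_insert_of_conn [DecidableEq E] (h : Conn head tail (insert e T) v w)
    (he : Conn head tail T (head e) (tail e)) : Conn head tail T v w := by
  have reach : ∀ {u}, Conn head tail T u (head e) ∨ Conn head tail T u (tail e) →
      Conn head tail T u (head e) :=
    fun hu => hu.elim id fun hu => hu.trans he.symm
  rcases h.of_insert with h | ⟨hv, hw⟩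
  exacts [h, (reach hv).trans (reach hw).symm]

variable (head tail) in
def connSetoid (T : Finset E) : Setoid V :=
  ⟨Conn head tail T, ⟨fun _ => .refl, Conn.symm, Conn.trans⟩⟩

variable (head tail) in
noncomputable def numComponents (T : Finset E) : ℕ :=
  Nat.card (Quotient (connSetoid head tail T))

theorem numComponents_empty [Fintype V] : numComponents head tail ∅ = Fintype.card V := by
  rw [numComponents, ← Nat.card_eq_fintype_card]
  exact (Nat.card_eq_of_bijective _
    ⟨fun a b h => (Quotient.exact h : Conn head tail ∅ a b).eq_of_empty,
      Quotient.mk_surjective⟩).symm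

theorem numComponents_le_insert [Finite V] [DecidableEq E] (T : Finset E) (e : E) :
    numComponents head tail T ≤ numComponents head tail (insert e T) + 1 := by
  classical
  let φ : Quotient (connSetoid head tail T) → Quotient (connSetoid head tail (insert e T)) :=
    Quotient.map id fun _ _ => Conn.mono (subset_insert e T)
  -- `φ` can only identify the classes of `head e` and `tail e`; moving the first to `none`
  -- leaves an injective map
  let ψ : Quotient (connSetoid head tail T) →
      Option (Quotient (connSetoid head tail (insert e T))) :=
    fun x => if x = ⟦head e⟧ then none else some (φ x)
  have hψ : Function.Injective ψ := by
    intro x y hxy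
    induction x using Quotient.inductionOn with | h a =>
    induction y using Quotient.inductionOn with | h b =>
    by_cases ha : (⟦a⟧ : Quotient (connSetoid head tail T)) = ⟦head e⟧ <;>
      by_cases hb : (⟦b⟧ : Quotient (connSetoid head tail T)) = ⟦head e⟧ <;>
      simp only [ψ, ha, hb, if_true, if_false, reduceCtorEq, Option.some_inj] at hxy
    · exact ha.trans hb.symm
    · rcases (Quotient.exact hxy : Conn head tail (insert e T) a b).of_insert with h | ⟨ha', hb'⟩
      · exact Quotient.sound h
      · have hat := ha'.resolve_left fun h => ha (Quotient.sound h)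
        have hbt := hb'.resolve_left fun h => hb (Quotient.sound h)
        exact Quotient.sound (hat.trans hbt.symm)
  calc numComponents head tail T
    _ ≤ Nat.card (Option (Quotient (connSetoid head tail (insert e T)))) :=
        Nat.card_le_card_of_injective ψ hψ
    _ = numComponents head tail (insert e T) + 1 := Finite.card_option

theorem card_le_numComponents_add_card [Fintype V] [DecidableEq E] (T : Finset E) :
    Fintype.card V ≤ numComponents head tail T + #T := by
  induction T using Finset.induction_on with
  | empty => simp [numComponents_empty]
  | insert e T he ih =>
    have := numComponents_le_insert (head := head) (tail := tail) T e
    rw [card_insert_of_notMem he]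
    omega

theorem card_le_card_add_one_of_conn [Fintype V] [Nonempty V] [DecidableEq E]
    (h : ∀ v w, Conn head tail T v w) : Fintype.card V ≤ #T + 1 := by
  have hone : numComponents head tail T = 1 :=
    Nat.card_eq_one_iff_unique.mpr
      ⟨⟨by rintro ⟨a⟩ ⟨b⟩; exact Quotient.sound (h a b)⟩, ⟨⟦Classical.arbitrary V⟧⟩⟩
  have := card_le_numComponents_add_card (head := head) (tail := tail) T
  omega

end Connectivity

section Cuts

variable {V E : Type*} [Fintype E] [DecidableEq V] {head tail : E → V} {T T' : Finset E}
  {e : E} {v w : V}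

theorem sum_mul_coboundary_eq_sum_mul_bd [Fintype V] (z : E → ℤ) (φ : V → ℤ) :
    ∑ e, z e * (φ (head e) - φ (tail e)) = ∑ v, φ v * bd head tail z v := by
  simp only [bd, LinearMap.coe_mk, AddHom.coe_mk, mul_sum]
  rw [sum_comm]
  refine sum_congr rfl fun e _ => ?_
  simp [mul_sub, sum_sub_distrib, mul_comm]

variable (head tail) in
open Classical in
noncomputable def componentCut (T : Finset E) (v : V) (e : E) : ℤ :=
  (if Conn head tail T v (head e) then 1 else 0) - (if Conn head tail T v (tail e) then 1 else 0)

omit [Fintype E] [DecidableEq V] in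
theorem componentCut_eq_zero_of_mem (he : e ∈ T) : componentCut head tail T v e = 0 := by
  have : Conn head tail T v (head e) ↔ Conn head tail T v (tail e) :=
    ⟨(·.trans (conn_of_mem he)), (·.trans (conn_of_mem he).symm)⟩
  classical
  rw [componentCut, if_congr this rfl rfl, sub_self]

omit [Fintype E] [DecidableEq V] in
theorem componentCut_head_eq_one (he : ¬ Conn head tail T (head e) (tail e)) :
    componentCut head tail T (head e) e = 1 := by
  simp [componentCut, he]

theorem sum_compl_mul_componentCut_eq_zero [Fintype V] [DecidableEq E] {z : E → ℤ}
    (hz : bd head tail z = 0) : ∑ e ∈ Tᶜ, z e * componentCut head tail T v e = 0 := by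
  classical
  rw [sum_subset (subset_univ Tᶜ) fun e _ he =>
    by rw [componentCut_eq_zero_of_mem (by simpa using he), mul_zero]]
  exact (sum_mul_coboundary_eq_sum_mul_bd z fun u => if Conn head tail T v u then 1 else 0).trans
    (by simp [hz])

omit [Fintype E] [DecidableEq V] in
theorem exists_componentCut_ne_zero (h : Conn head tail T' v w)
    (hvw : ¬ Conn head tail T v w) : ∃ e ∈ T', componentCut head tail T v e ≠ 0 := by
  induction h with
  | refl => exact absurd .refl hvw
  | @tail b c hvb hstep ih =>
    by_cases hb : Conn head tail T v b
    · obtain ⟨e, he, hbc⟩ := hstep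
      refine ⟨e, he, ?_⟩
      rcases hbc with ⟨rfl, rfl⟩ | ⟨rfl, rfl⟩ <;>
        simp [componentCut, hb, hvw]
    · exact ih hb

end Cuts

section SpanningTrees

variable {V E : Type*} [Fintype V] [Fintype E] [DecidableEq V] [DecidableEq E]
  {head tail : E → V} {T : Finset E}

omit [DecidableEq V] in
theorem card_compl_of_isSpanningTree {k : ℕ} (hk : k + Fintype.card V = Fintype.card E + 1)
    (hT : IsSpanningTree head tail T) : #Tᶜ = k := by
  have := card_compl_add_card T
  have := hT.1
  omega

/-- Removing an edge `e₀` disconnects a spanning tree, and the component of `head e₀` then gives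
a cut meeting the support of `z` only in `e₀`. -/
theorem eq_zero_of_isSpanningTree (hT : IsSpanningTree head tail T) {z : E → ℤ}
    (hz : bd head tail z = 0) (hsupp : ∀ e ∉ T, z e = 0) : z = 0 := by
  funext e₀
  by_cases he₀ : e₀ ∉ T
  · exact hsupp e₀ he₀
  rw [not_not] at he₀
  have : Nonempty V := ⟨head e₀⟩
  have hsep : ¬ Conn head tail (T.erase e₀) (head e₀) (tail e₀) := fun h => by
    have := card_le_card_add_one_of_conn fun v w => by
      have hvw : Conn head tail (insert e₀ (T.erase e₀)) v w := by
        rw [insert_erase he₀]; exact hT.2 v w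
      exact hvw.of_insert_of_conn h
    have := card_erase_add_one he₀
    have := hT.1
    omega
  have hcut := sum_compl_mul_componentCut_eq_zero (T := T.erase e₀) (v := head e₀) hz
  rwa [sum_eq_single_of_mem e₀ (by simp) fun e he hne => by
      rw [hsupp e (by simp_all), zero_mul], componentCut_head_eq_one hsep, mul_one] at hcut

variable (head tail) in
def IsFundamentalCycle (T : Finset E) (f : E) (c : E → ℤ) : Prop :=
  bd head tail c = 0 ∧ c f = 1 ∧ ∀ e, e ∉ T → e ≠ f → c e = 0

theorem eq_sum_smul_fundamentalCycle (hT : IsSpanningTree head tail T) {c : E → E → ℤ}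
    (hc : ∀ f ∉ T, IsFundamentalCycle head tail T f (c f)) {z : E → ℤ}
    (hz : bd head tail z = 0) : z = ∑ f ∈ Tᶜ, z f • c f := by
  rw [← sub_eq_zero]
  refine eq_zero_of_isSpanningTree hT ?_ fun e he => ?_
  · rw [map_sub, map_sum, hz, zero_sub, neg_eq_zero]
    exact sum_eq_zero fun f hf => by rw [map_smul, (hc f (mem_compl.mp hf)).1, smul_zero]
  · rw [Pi.sub_apply, Finset.sum_apply, sum_eq_single_of_mem e (mem_compl.mpr he) fun f hf hfe =>
      by rw [Pi.smul_apply, (hc f (mem_compl.mp hf)).2.2 e he (Ne.symm hfe), smul_zero],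
      Pi.smul_apply, (hc e he).2.1, smul_eq_mul, mul_one, sub_self]

end SpanningTrees

section Wedges

variable {E : Type*} [Fintype E] [DecidableEq E] [LinearOrder E] {k : ℕ}

omit [Fintype E] [DecidableEq E] [LinearOrder E] in
theorem chainWedge_eq_ιMulti (γ : Fin k → E → ℤ) :
    chainWedge γ = ExteriorAlgebra.ιMulti ℤ k γ := by
  rw [chainWedge, listWedge, ExteriorAlgebra.ιMulti_apply, List.map_map, List.ofFn_eq_map]
  rfl

omit [Fintype E] [DecidableEq E] in
theorem listWedge_sort_map {S : Finset E} (hS : #S = k) (c : E → E → ℤ) :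
    listWedge ((S.sort (· ≤ ·)).map c) = chainWedge (c ∘ S.orderEmbOfFin hS) := by
  rw [chainWedge, ← List.map_map, listMap_orderEmbOfFin_finRange]

noncomputable def columnMinor (γ : Fin k → E → ℤ) (S : Finset E) : ℤ :=
  if h : #S = k then ((Matrix.of γ).submatrix id (S.orderEmbOfFin h)).det else 0

theorem chainWedge_eq_sum_columnMinor_smul_eWedge (γ : Fin k → E → ℤ) :
    chainWedge γ = ∑ S : Finset E, columnMinor γ S • eWedge S := by
  rw [← sum_subset (subset_univ (powersetCard k univ)) fun S _ hS => by
      rw [columnMinor, dif_neg (by simpa using hS), zero_smul],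
    sum_subtype _ (p := (· ∈ Set.powersetCard E k)) (by simp [Set.powersetCard.mem_iff]),
    chainWedge_eq_ιMulti, ExteriorAlgebra.ιMulti_eq_sum_det_smul_ιMulti_family]
  refine sum_congr rfl fun s _ => ?_
  rw [columnMinor, dif_pos (Set.powersetCard.card_eq s), eWedge,
    listWedge_sort_map (Set.powersetCard.card_eq s), chainWedge_eq_ιMulti]
  congr 2
  funext j
  exact Pi.basisFun_apply ℤ E _

end Wedges

section Minors

variable {V E : Type*} [Fintype V] [Fintype E] [DecidableEq V] [DecidableEq E] [LinearOrder E]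
  {head tail : E → V} {k : ℕ} {γ : Fin k → E → ℤ}

/-- The minor is the determinant of the change of basis from the fundamental cycles of `T` to
`γ`, hence a unit. -/
theorem listWedge_fundamentalCycles {T : Finset E} (hT : IsSpanningTree head tail T)
    (hk : #Tᶜ = k) (hγ_indep : LinearIndependent ℤ γ)
    (hγ_span : Submodule.span ℤ (Set.range γ) = LinearMap.ker (bd head tail)) {c : E → E → ℤ}
    (hc : ∀ f ∉ T, IsFundamentalCycle head tail T f (c f)) :
    listWedge ((Tᶜ.sort (· ≤ ·)).map c) = columnMinor γ Tᶜ • chainWedge γ := by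
  set s := Tᶜ.orderEmbOfFin hk
  set A := (Matrix.of γ).submatrix id s
  have hexp : ∀ i, γ i = ∑ j, A i j • c (s j) := fun i => by
    have hγi : γ i ∈ LinearMap.ker (bd head tail) := hγ_span ▸ Submodule.subset_span ⟨i, rfl⟩
    rw [eq_sum_smul_fundamentalCycle hT hc hγi, ← sum_orderEmbOfFin Tᶜ hk]
    rfl
  have hspan : ∀ j, c (s j) ∈ Submodule.span ℤ (Set.range γ) := fun j =>
    hγ_span ▸ (hc _ (mem_compl.mp (orderEmbOfFin_mem Tᶜ hk j))).1
  have hunit := isUnit_det_of_linearIndependent hγ_indep hspan hexp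
  have hγ : chainWedge γ = A.det • chainWedge (c ∘ s) := by
    rw [chainWedge_eq_ιMulti, chainWedge_eq_ιMulti,
      ← AlternatingMap.map_sum_smul_eq_det_smul]
    exact congrArg _ (funext hexp)
  rw [listWedge_sort_map hk, columnMinor, dif_pos hk, hγ, smul_smul, Int.isUnit_mul_self hunit,
    one_smul]

/-- If `Sᶜ` is disconnected, the coboundary of a component of `Sᶜ` is a nonzero vector supported
in `S` and orthogonal to every cycle, hence in the kernel of the minor. -/
theorem columnMinor_eq_zero_of_not_conn (hconn : ∀ v w, Conn head tail univ v w)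
    (hγ : ∀ i, bd head tail (γ i) = 0) {S : Finset E}
    (hS : ¬ ∀ v w, Conn head tail Sᶜ v w) : columnMinor γ S = 0 := by
  unfold columnMinor
  split_ifs with hk
  · push Not at hS
    obtain ⟨v, w, hvw⟩ := hS
    set s := S.orderEmbOfFin hk
    obtain ⟨e, -, he⟩ := exists_componentCut_ne_zero (hconn v w) hvw
    obtain ⟨j, rfl⟩ : e ∈ Set.range s := by
      rw [range_orderEmbOfFin]
      by_contra heS
      exact he (componentCut_eq_zero_of_mem (mem_compl.mpr heS))
    refine Matrix.exists_mulVec_eq_zero_iff.mp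
      ⟨fun l => componentCut head tail Sᶜ v (s l), fun h => he (congrFun h j), funext fun i => ?_⟩
    have := sum_compl_mul_componentCut_eq_zero (T := Sᶜ) (v := v) (hγ i)
    rwa [compl_compl, ← sum_orderEmbOfFin S hk] at this
  · rfl

theorem columnMinor_compl_eq_zero_of_not_isSpanningTree (hconn : ∀ v w, Conn head tail univ v w)
    (hk : k + Fintype.card V = Fintype.card E + 1) (hγ : ∀ i, bd head tail (γ i) = 0)
    {T : Finset E} (hT : ¬ IsSpanningTree head tail T) : columnMinor γ Tᶜ = 0 := by
  by_cases hTk : #Tᶜ = k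
  · refine columnMinor_eq_zero_of_not_conn hconn hγ fun h => hT ⟨?_, by rwa [compl_compl] at h⟩
    have := card_compl_add_card T
    omega
  · rw [columnMinor, dif_neg hTk]

end Minors

open Classical TensorProduct

/-- **The tensor-square cycle–tree identity.**
Let `K` be a finite connected graph with first Betti number `k`, `(γ₁,…,γ_k)` an
integral basis of `Z₁(K,ℤ)`, and for each spanning tree `T` and edge `f ∉ T` let
`γ(T,f)` be the fundamental cycle (the unique cycle supported in `T ∪ {f}` with
coefficient `1` on `f`).  Then
`Σ_{T spanning tree} (γ(T,e₁) ∧ … ∧ γ(T,e_k)) ⊗ (e₁ ∧ … ∧ e_k) = (γ₁∧…∧γ_k)^{⊗2}`,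
where `e₁ < … < e_k` are the edges of `K` not in `T`. -/
theorem tensor_square_cycle_tree_identity
    {V E : Type*} [Fintype V] [Fintype E] [DecidableEq V] [DecidableEq E]
    [LinearOrder E] (head tail : E → V)
    (hconn : ∀ v w : V, Conn head tail (Finset.univ : Finset E) v w)
    (k : ℕ) (hk : k + Fintype.card V = Fintype.card E + 1)
    (γ : Fin k → (E → ℤ))
    (hγ_indep : LinearIndependent ℤ γ)
    (hγ_span : Submodule.span ℤ (Set.range γ) = LinearMap.ker (bd head tail))
    (g : Finset E → E → (E → ℤ))
    (hg : ∀ T f, IsSpanningTree head tail T → f ∉ T →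
      bd head tail (g T f) = 0 ∧ g T f f = 1 ∧
      ∀ e, e ∉ T → e ≠ f → g T f e = 0) :
    (∑ T : Finset E,
        if IsSpanningTree head tail T then
          (listWedge (((Tᶜ : Finset E).sort (· ≤ ·)).map (g T))) ⊗ₜ[ℤ]
            (eWedge (Tᶜ : Finset E))
        else 0) =
      (chainWedge γ) ⊗ₜ[ℤ] (chainWedge γ) := by
  have hγ : ∀ i, bd head tail (γ i) = 0 := fun i =>
    LinearMap.mem_ker.mp (hγ_span ▸ Submodule.subset_span ⟨i, rfl⟩)
  calc _ = ∑ T : Finset E, chainWedge γ ⊗ₜ[ℤ] (columnMinor γ Tᶜ • eWedge Tᶜ) := by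
        refine sum_congr rfl fun T _ => ?_
        split_ifs with hT
        · rw [listWedge_fundamentalCycles hT (card_compl_of_isSpanningTree hk hT) hγ_indep
            hγ_span (hg T · hT), smul_tmul]
        · rw [columnMinor_compl_eq_zero_of_not_isSpanningTree hconn hk hγ hT, zero_smul, tmul_zero]
    _ = chainWedge γ ⊗ₜ[ℤ] ∑ S : Finset E, columnMinor γ S • eWedge S := by
        rw [← tmul_sum]
        exact congrArg _ <|
          Equiv.sum_comp (compl_involutive.toPerm _) fun S => columnMinor γ S • eWedge S
    _ = _ := by rw [← chainWedge_eq_sum_columnMinor_smul_eWedge]
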